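/- Let 0 < α < n and 1 < s < ∞. Define Γ_{α,s}(f) := inf{‖φ‖_{L^s(ℝ^n)}^s : φ ≥ 0, I_α * φ(x) ≥ |f(x)| for all x}. Then there is a constant C = C(s) (one may take C = 2^s/(1 - 2^{-s})) such that Γ_{α,s}(f) ≤ C ∫ |f|^s d cap_{α,s} for every f : ℝ^n → ℝ. -/

import Mathlib

open scoped ENNReal
open Metric Set MeasureTheory

noncomputable section

/-- `ℝⁿ` as Euclidean space. -/
abbrev Rn (n : ℕ) := EuclideanSpace ℝ (Fin n)

/-- The Choquet integral of a nonnegative function `g` with respect to a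
(monotone) set function `C`: `∫ g dC := ∫_0^∞ C({g > t}) dt`. -/
noncomputable def choquet {X : Type*} (C : Set X → ℝ≥0∞) (g : X → ℝ≥0∞) : ℝ≥0∞ :=
  ∫⁻ t in Ioi (0 : ℝ), C {x | ENNReal.ofReal t < g x}

/-- The Choquet integral of `g` restricted to a set `A`. -/
noncomputable def choquetOn {X : Type*} (C : Set X → ℝ≥0∞) (A : Set X) (g : X → ℝ≥0∞) : ℝ≥0∞ :=
  ∫⁻ t in Ioi (0 : ℝ), C {x | x ∈ A ∧ ENNReal.ofReal t < g x}

/-- The `L^∞(C)` norm: `inf {λ > 0 : C({|f| > λ}) = 0}` (formulated in `ℝ≥0∞`). -/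
noncomputable def choquetEssSup {X : Type*} (C : Set X → ℝ≥0∞) (f : X → ℝ) : ℝ≥0∞ :=
  sInf {l : ℝ≥0∞ | C {x | l < ENNReal.ofReal |f x|} = 0}

/-- `C`-quasicontinuity of a function `f`. -/
def QuasiCont {X : Type*} [TopologicalSpace X] (C : Set X → ℝ≥0∞) (f : X → ℝ) : Prop :=
  ∀ ε : ℝ≥0∞, 0 < ε → ∃ U : Set X, IsOpen U ∧ C U < ε ∧ ContinuousOn f Uᶜ

/-- Membership in the capacitary space `L^p(C)`: `C`-quasicontinuous with
finite `p`-th power Choquet integral. -/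
def MemChoquetLp {X : Type*} [TopologicalSpace X] (C : Set X → ℝ≥0∞) (p : ℝ) (f : X → ℝ) : Prop :=
  QuasiCont C f ∧ choquet C (fun x => ENNReal.ofReal |f x| ^ p) < ∞

/-- The constant `γ(α)` in the Riesz kernel `I_α = (1/γ(α)) |x|^{α-n}`. -/
noncomputable def rieszConst (n : ℕ) (α : ℝ) : ℝ :=
  Real.pi ^ ((n : ℝ) / 2) * 2 ^ α * Real.Gamma (α / 2) / Real.Gamma (((n : ℝ) - α) / 2)

/-- The Riesz potential `I_α * φ` of a nonnegative function `φ`. -/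
noncomputable def rieszPot (n : ℕ) (α : ℝ) (φ : Rn n → ℝ≥0∞) (x : Rn n) : ℝ≥0∞ :=
  ∫⁻ y, ENNReal.ofReal ((1 / rieszConst n α) * ‖x - y‖ ^ (α - (n : ℝ))) * φ y

/-- The Riesz capacity `cap_{α,s}(E) = inf {‖φ‖_{L^s}^s : φ ≥ 0, I_α*φ ≥ 1 on E}`. -/
noncomputable def rieszCap (n : ℕ) (α s : ℝ) (E : Set (Rn n)) : ℝ≥0∞ :=
  ⨅ (φ : Rn n → ℝ≥0∞) (_ : ∀ x ∈ E, 1 ≤ rieszPot n α φ x), ∫⁻ y, φ y ^ s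

/-- The capacitary maximal function associated to the Riesz capacity:
`M_{cap_{α,s}} g(x) := sup_{r>0} (1/(cap_{α,s}(B(0,1)) r^{n-αs})) ∫_{B(x,r)} g d cap_{α,s}`. -/
noncomputable def maximalCap (n : ℕ) (α s : ℝ) (g : Rn n → ℝ≥0∞) (x : Rn n) : ℝ≥0∞ :=
  ⨆ (r : ℝ) (_ : 0 < r),
    (rieszCap n α s (ball (0 : Rn n) 1) * ENNReal.ofReal (r ^ ((n : ℝ) - α * s)))⁻¹ *
      choquetOn (rieszCap n α s) (ball x r) g

/-- `Γ_{α,s}(g) := inf {‖φ‖_{L^s}^s : φ ≥ 0, I_α * φ ≥ g everywhere}`. -/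
noncomputable def rieszGammaFunc (n : ℕ) (α s : ℝ) (g : Rn n → ℝ≥0∞) : ℝ≥0∞ :=
  ⨅ (φ : Rn n → ℝ≥0∞) (_ : ∀ x, g x ≤ rieszPot n α φ x), ∫⁻ y, φ y ^ s

/-! Dyadic decomposition of `g = |f|`. For `k : ℤ` let `E_k = {2 ^ k < g}` and let `ψ_k` be a
measurable test function for `cap_{α,s}(E_k)`, optimal up to a summable error. The function
`φ = sup_k 2 ^ (k + 1) ψ_k` is admissible for `Γ_{α,s}(g)`: where `2 ^ k < g ≤ 2 ^ (k + 1)`,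
`I_α * φ ≥ 2 ^ (k + 1) I_α * ψ_k ≥ g`. As `φ ^ s ≤ ∑_k 2 ^ ((k + 1) s) ψ_k ^ s`, this gives
`Γ_{α,s}(g) ≤ 2 ^ s ∑_k 2 ^ (k s) cap_{α,s}(E_k)`, and integrating `t ↦ cap_{α,s}({g ^ s > t})`
over the intervals `(2 ^ ((k - 1) s), 2 ^ (k s)]` bounds `(1 - 2 ^ (-s))` times this sum by the
Choquet integral of `g ^ s`.

Measurability of `ψ_k`, needed to integrate the series term by term, costs nothing: a test
function can be replaced by its a.e.-largest measurable minorant, which has the same `L^s` norm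
(the lower Lebesgue integral only sees measurable minorants) and, for the same reason, a potential
at least as large. -/

section MeasurableMinorant

variable {X : Type*} [MeasurableSpace X] {μ : Measure X}

theorem exists_measurable_lintegral_eq_forall_le_ae_le (F : X → ℝ≥0∞)
    (hF : ∫⁻ x, F x ∂μ ≠ ∞) :
    ∃ m : X → ℝ≥0∞, Measurable m ∧ ∫⁻ x, m x ∂μ = ∫⁻ x, F x ∂μ ∧
      ∀ w : X → ℝ≥0∞, Measurable w → w ≤ F → w ≤ᵐ[μ] m := by
  obtain ⟨m, hm, hmF, hint⟩ := exists_measurable_le_lintegral_eq μ F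
  refine ⟨m, hm, hint.symm, fun w hw hwF => ?_⟩
  have hmax : m =ᵐ[μ] fun x => max (w x) (m x) :=
    ae_eq_of_ae_le_of_lintegral_le (.of_forall fun x => le_max_right _ _) (hint ▸ hF)
      (hw.max hm).aemeasurable
      (hint ▸ lintegral_mono fun x => max_le (hwF x) (hmF x))
  filter_upwards [hmax] with x hx
  exact hx ▸ le_max_left _ _

theorem exists_measurable_lintegral_rpow_eq_forall_le_ae_le {s : ℝ} (hs : 0 < s)
    (φ : X → ℝ≥0∞) (hφ : ∫⁻ x, φ x ^ s ∂μ ≠ ∞) :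
    ∃ ψ : X → ℝ≥0∞, Measurable ψ ∧ ∫⁻ x, ψ x ^ s ∂μ = ∫⁻ x, φ x ^ s ∂μ ∧
      ∀ w : X → ℝ≥0∞, Measurable w → w ≤ φ → w ≤ᵐ[μ] ψ := by
  obtain ⟨m, hm, hint, hmax⟩ := exists_measurable_lintegral_eq_forall_le_ae_le _ hφ
  have hψs : ∀ x, (m x ^ s⁻¹) ^ s = m x := fun x => ENNReal.rpow_inv_rpow hs.ne' _
  refine ⟨fun x => m x ^ s⁻¹, hm.pow_const _, by simpa only [hψs] using hint, fun w hw hwφ => ?_⟩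
  filter_upwards [hmax _ (hw.pow_const s) fun x => ENNReal.rpow_le_rpow (hwφ x) hs.le] with x hx
  rw [← ENNReal.rpow_rpow_inv hs.ne' (w x)]
  exact ENNReal.rpow_le_rpow hx (inv_nonneg.2 hs.le)

theorem lintegral_mul_le_of_forall_le_ae_le {k φ ψ : X → ℝ≥0∞} (hk : Measurable k)
    (hk_top : ∀ x, k x ≠ ∞) (hψ : ∀ w : X → ℝ≥0∞, Measurable w → w ≤ φ → w ≤ᵐ[μ] ψ) :
    ∫⁻ x, k x * φ x ∂μ ≤ ∫⁻ x, k x * ψ x ∂μ := by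
  rw [← iSup_lintegral_measurable_le_eq_lintegral]
  refine iSup₂_le fun u hu => iSup_le fun hu_le => ?_
  have hu_div : (fun x => u x / k x) ≤ φ := fun x => ENNReal.div_le_of_le_mul' (hu_le x)
  have hu_eq : ∀ x, u x / k x * k x = u x := fun x =>
    ENNReal.div_mul_cancel' (fun h => by simpa [h] using hu_le x) (fun h => absurd h (hk_top x))
  calc ∫⁻ x, u x ∂μ = ∫⁻ x, k x * (u x / k x) ∂μ := by simp only [mul_comm (k _), hu_eq]
    _ ≤ ∫⁻ x, k x * ψ x ∂μ := by
      refine lintegral_mono_ae ?_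
      filter_upwards [hψ _ (hu.div hk) hu_div] with x hx
      exact mul_le_mul_right hx _

end MeasurableMinorant

theorem ENNReal.ofReal_two_rpow (p : ℝ) : ENNReal.ofReal ((2 : ℝ) ^ p) = 2 ^ p := by
  rw [← ENNReal.ofReal_rpow_of_pos two_pos, ENNReal.ofReal_ofNat]

theorem ENNReal.exists_two_rpow_lt_le_two_rpow_add_one {a : ℝ≥0∞} (ha₀ : a ≠ 0) (ha : a ≠ ∞) :
    ∃ k : ℤ, 2 ^ (k : ℝ) < a ∧ a ≤ 2 ^ ((k : ℝ) + 1) := by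
  obtain ⟨k, hk⟩ := ENNReal.exists_mem_Ioc_zpow ha₀ ha ENNReal.one_lt_two ENNReal.ofNat_ne_top
  exact ⟨k, by simpa [← ENNReal.rpow_intCast] using hk⟩

theorem ENNReal.rpow_iSup_le_tsum {ι : Type*} {s : ℝ} (hs : 0 < s) (f : ι → ℝ≥0∞) :
    (⨆ i, f i) ^ s ≤ ∑' i, f i ^ s := by
  have := (ENNReal.orderIsoRpow s hs).map_iSup f
  simp only [ENNReal.orderIsoRpow_apply] at this
  exact this ▸ iSup_le ENNReal.le_tsum

theorem volume_Ioc_two_rpow_sub_one_mul {s : ℝ} (hs : 0 ≤ s) (k : ℝ) :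
    volume (Ioc ((2 : ℝ) ^ ((k - 1) * s)) (2 ^ (k * s))) = (1 - 2 ^ (-s)) * 2 ^ (k * s) := by
  have h : (2 : ℝ) ^ (k * s) - 2 ^ ((k - 1) * s) = (1 - 2 ^ (-s)) * 2 ^ (k * s) := by
    rw [show (k - 1) * s = -s + k * s by ring, Real.rpow_add two_pos]; ring
  have h2s : (2 : ℝ) ^ (-s) ≤ 1 := Real.rpow_le_one_of_one_le_of_nonpos one_le_two (by linarith)
  rw [Real.volume_Ioc, h, ENNReal.ofReal_mul (by linarith), ENNReal.ofReal_sub _ (by positivity),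
    ENNReal.ofReal_one, ENNReal.ofReal_two_rpow, ENNReal.ofReal_two_rpow]

theorem one_sub_two_rpow_neg_mul_tsum_le_choquet {X : Type*} {C : Set X → ℝ≥0∞}
    (hC : Monotone C) {s : ℝ} (hs : 0 < s) (g : X → ℝ≥0∞) :
    (1 - 2 ^ (-s)) * ∑' k : ℤ, 2 ^ ((k : ℝ) * s) * C {x | 2 ^ (k : ℝ) < g x} ≤
      choquet C (fun x => g x ^ s) := by
  set I : ℤ → Set ℝ := fun k => Ioc ((2 : ℝ) ^ (((k : ℝ) - 1) * s)) (2 ^ ((k : ℝ) * s))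
  have hI_disj : Pairwise (Function.onFun Disjoint I) := by
    have hmono : Monotone fun k : ℤ => (2 : ℝ) ^ ((k : ℝ) * s) := fun j k hjk =>
      Real.rpow_le_rpow_of_exponent_le one_le_two (by gcongr)
    simpa [I, Order.pred_eq_sub_one] using hmono.pairwise_disjoint_on_Ioc_pred
  have hI_pos : (⋃ k, I k) ⊆ Ioi 0 :=
    iUnion_subset fun k t ht => (by positivity : (0 : ℝ) < _).trans ht.1
  have hlevel : ∀ k : ℤ, ∀ t ∈ I k,
      C {x | 2 ^ (k : ℝ) < g x} ≤ C {x | ENNReal.ofReal t < g x ^ s} := fun k t ht =>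
    hC fun x (hx : 2 ^ (k : ℝ) < g x) => calc
      ENNReal.ofReal t ≤ 2 ^ ((k : ℝ) * s) :=
        ENNReal.ofReal_two_rpow _ ▸ ENNReal.ofReal_le_ofReal ht.2
      _ = (2 ^ (k : ℝ)) ^ s := ENNReal.rpow_mul _ _ _
      _ < g x ^ s := ENNReal.rpow_lt_rpow hx hs
  calc (1 - 2 ^ (-s)) * ∑' k : ℤ, 2 ^ ((k : ℝ) * s) * C {x | 2 ^ (k : ℝ) < g x}
      = ∑' k : ℤ, ∫⁻ _ in I k, C {x | 2 ^ (k : ℝ) < g x} := by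
        rw [← ENNReal.tsum_mul_left]
        refine tsum_congr fun k => ?_
        rw [setLIntegral_const, volume_Ioc_two_rpow_sub_one_mul hs.le]; ring
    _ ≤ ∑' k : ℤ, ∫⁻ t in I k, C {x | ENNReal.ofReal t < g x ^ s} :=
        ENNReal.tsum_le_tsum fun k =>
          setLIntegral_mono' measurableSet_Ioc (hlevel k)
    _ = ∫⁻ t in ⋃ k, I k, C {x | ENNReal.ofReal t < g x ^ s} :=
        (lintegral_iUnion (fun _ => measurableSet_Ioc) hI_disj _).symm
    _ ≤ choquet C (fun x => g x ^ s) := lintegral_mono_set hI_pos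

section Riesz

variable {n : ℕ} {α s : ℝ}

theorem rieszCap_mono : Monotone (rieszCap n α s) := fun _ _ hEF =>
  le_iInf₂ fun φ hφ => iInf₂_le φ fun x hx => hφ x (hEF hx)

theorem rieszPot_mono {φ ψ : Rn n → ℝ≥0∞} (h : φ ≤ ψ) (x : Rn n) :
    rieszPot n α φ x ≤ rieszPot n α ψ x :=
  lintegral_mono fun y => mul_le_mul_right (h y) _

theorem rieszPot_const_mul {c : ℝ≥0∞} (hc : c ≠ ∞) (φ : Rn n → ℝ≥0∞) (x : Rn n) :
    rieszPot n α (fun y => c * φ y) x = c * rieszPot n α φ x := by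
  simp only [rieszPot, ← lintegral_const_mul' c _ hc, mul_left_comm c]

theorem exists_measurable_lintegral_rpow_eq_rieszPot_le (hs : 0 < s) (φ : Rn n → ℝ≥0∞)
    (hφ : ∫⁻ y, φ y ^ s ≠ ∞) :
    ∃ ψ : Rn n → ℝ≥0∞, Measurable ψ ∧ ∫⁻ y, ψ y ^ s = ∫⁻ y, φ y ^ s ∧
      ∀ x, rieszPot n α φ x ≤ rieszPot n α ψ x := by
  obtain ⟨ψ, hψm, hψs, hψmax⟩ := exists_measurable_lintegral_rpow_eq_forall_le_ae_le hs φ hφ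
  refine ⟨ψ, hψm, hψs, fun x =>
    lintegral_mul_le_of_forall_le_ae_le (by fun_prop) (fun _ => ENNReal.ofReal_ne_top) hψmax⟩

theorem exists_measurable_rieszPot_ge_lintegral_le_rieszCap_add (hs : 0 < s) {E : Set (Rn n)}
    (hE : rieszCap n α s E ≠ ∞) {η : ℝ≥0∞} (hη : η ≠ 0) :
    ∃ ψ : Rn n → ℝ≥0∞, Measurable ψ ∧ (∀ x ∈ E, 1 ≤ rieszPot n α ψ x) ∧
      ∫⁻ y, ψ y ^ s ≤ rieszCap n α s E + η := by
  obtain ⟨φ, hφ⟩ := iInf_lt_iff.1 (ENNReal.lt_add_right hE hη)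
  obtain ⟨hφE, hφs⟩ := iInf_lt_iff.1 hφ
  obtain ⟨ψ, hψm, hψs, hψ⟩ := exists_measurable_lintegral_rpow_eq_rieszPot_le hs φ hφs.ne_top
  exact ⟨ψ, hψm, fun x hx => (hφE x hx).trans (hψ x), hψs ▸ hφs.le⟩

theorem rieszGammaFunc_le_tsum_two_rpow_mul_lintegral (hs : 0 < s) {g : Rn n → ℝ≥0∞}
    (hg : ∀ x, g x ≠ ∞) (ψ : ℤ → Rn n → ℝ≥0∞) (hψm : ∀ k, Measurable (ψ k))
    (hψ : ∀ (k : ℤ) x, 2 ^ (k : ℝ) < g x → 1 ≤ rieszPot n α (ψ k) x) :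
    rieszGammaFunc n α s g ≤ ∑' k : ℤ, 2 ^ (((k : ℝ) + 1) * s) * ∫⁻ y, ψ k y ^ s := by
  set φ : Rn n → ℝ≥0∞ := fun y => ⨆ k : ℤ, 2 ^ ((k : ℝ) + 1) * ψ k y
  have hφ : ∀ x, g x ≤ rieszPot n α φ x := by
    intro x
    rcases eq_or_ne (g x) 0 with h0 | h0
    · simp [h0]
    obtain ⟨k, hk_lt, hk_le⟩ := ENNReal.exists_two_rpow_lt_le_two_rpow_add_one h0 (hg x)
    calc g x ≤ 2 ^ ((k : ℝ) + 1) * rieszPot n α (ψ k) x :=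
          hk_le.trans (le_mul_of_one_le_right' (hψ k x hk_lt))
      _ = rieszPot n α (fun y => 2 ^ ((k : ℝ) + 1) * ψ k y) x :=
          (rieszPot_const_mul (by simp) _ _).symm
      _ ≤ rieszPot n α φ x :=
          rieszPot_mono (fun y => le_iSup (fun k : ℤ => 2 ^ ((k : ℝ) + 1) * ψ k y) k) x
  calc rieszGammaFunc n α s g ≤ ∫⁻ y, φ y ^ s := iInf₂_le φ hφ
    _ ≤ ∫⁻ y, ∑' k : ℤ, 2 ^ (((k : ℝ) + 1) * s) * ψ k y ^ s := by
        refine lintegral_mono fun y =>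
          (ENNReal.rpow_iSup_le_tsum hs _).trans_eq (tsum_congr fun k => ?_)
        rw [ENNReal.mul_rpow_of_nonneg _ _ hs.le, ← ENNReal.rpow_mul]
    _ = ∑' k : ℤ, 2 ^ (((k : ℝ) + 1) * s) * ∫⁻ y, ψ k y ^ s := by
        rw [lintegral_tsum fun k => (((hψm k).pow_const s).const_mul _).aemeasurable]
        exact tsum_congr fun k => lintegral_const_mul _ ((hψm k).pow_const s)

theorem rieszGammaFunc_le_two_rpow_mul_tsum (hs : 0 < s) {g : Rn n → ℝ≥0∞}
    (hg : ∀ x, g x ≠ ∞) :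
    rieszGammaFunc n α s g ≤
      2 ^ s * ∑' k : ℤ, 2 ^ ((k : ℝ) * s) * rieszCap n α s {x | 2 ^ (k : ℝ) < g x} := by
  by_cases hfin : ∀ k : ℤ, rieszCap n α s {x | 2 ^ (k : ℝ) < g x} ≠ ∞
  swap
  · obtain ⟨k, hk⟩ := not_forall_not.1 hfin
    rw [ENNReal.tsum_eq_top_of_eq_top ⟨k, by rw [hk, ENNReal.mul_top (by simp)]⟩,
      ENNReal.mul_top (by simp)]
    exact le_top
  refine ENNReal.le_of_forall_pos_le_add fun ε hε _ => ?_
  obtain ⟨δ, hδ, hδε⟩ := ENNReal.exists_pos_sum_of_countable' (ENNReal.coe_pos.2 hε).ne' ℤ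
  choose ψ hψm hψE hψs using fun k : ℤ =>
    exists_measurable_rieszPot_ge_lintegral_le_rieszCap_add (α := α) hs (hfin k)
      (ENNReal.div_pos (hδ k).ne' (by simp : (2 : ℝ≥0∞) ^ (((k : ℝ) + 1) * s) ≠ ∞)).ne'
  calc rieszGammaFunc n α s g
      ≤ ∑' k : ℤ, 2 ^ (((k : ℝ) + 1) * s) * ∫⁻ y, ψ k y ^ s :=
        rieszGammaFunc_le_tsum_two_rpow_mul_lintegral hs hg ψ hψm hψE
    _ ≤ ∑' k : ℤ, 2 ^ (((k : ℝ) + 1) * s) * (rieszCap n α s {x | 2 ^ (k : ℝ) < g x} +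
          δ k / 2 ^ (((k : ℝ) + 1) * s)) :=
        ENNReal.tsum_le_tsum fun k => mul_le_mul_right (hψs k) _
    _ = ∑' k : ℤ, (2 ^ s * (2 ^ ((k : ℝ) * s) * rieszCap n α s {x | 2 ^ (k : ℝ) < g x}) + δ k) := by
        refine tsum_congr fun k => ?_
        rw [mul_add, ENNReal.mul_div_cancel (by simp) (by simp), add_mul, one_mul,
          ENNReal.rpow_add _ _ (by simp) (by simp)]
        ring
    _ ≤ 2 ^ s * ∑' k : ℤ, 2 ^ ((k : ℝ) * s) * rieszCap n α s {x | 2 ^ (k : ℝ) < g x} + ε := by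
        rw [ENNReal.tsum_add, ENNReal.tsum_mul_left]
        gcongr

end Riesz

theorem statement12_general (n : ℕ) (α s : ℝ) (hs : 1 < s) :
    ∃ C : ℝ, 0 < C ∧ ∀ f : Rn n → ℝ,
      rieszGammaFunc n α s (fun x => ENNReal.ofReal |f x|) ≤
        ENNReal.ofReal C *
          choquet (rieszCap n α s) (fun x => ENNReal.ofReal |f x| ^ s) := by
  have hs₀ : 0 < s := one_pos.trans hs
  have h2s : (2 : ℝ) ^ (-s) < 1 := Real.rpow_lt_one_of_one_lt_of_neg one_lt_two (by linarith)
  have hC : ENNReal.ofReal (2 ^ s / (1 - 2 ^ (-s))) = 2 ^ s / (1 - 2 ^ (-s)) := by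
    rw [ENNReal.ofReal_div_of_pos (by linarith), ENNReal.ofReal_sub _ (by positivity),
      ENNReal.ofReal_one, ENNReal.ofReal_two_rpow, ENNReal.ofReal_two_rpow]
  refine ⟨2 ^ s / (1 - 2 ^ (-s)), div_pos (by positivity) (by linarith), fun f => ?_⟩
  have hc : (1 : ℝ≥0∞) - 2 ^ (-s) ≠ 0 :=
    (tsub_pos_iff_lt.2 (ENNReal.rpow_lt_one_of_one_lt_of_neg (by norm_num) (by linarith))).ne'
  calc rieszGammaFunc n α s (fun x => ENNReal.ofReal |f x|)
      ≤ 2 ^ s * ∑' k : ℤ, 2 ^ ((k : ℝ) * s) *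
          rieszCap n α s {x | 2 ^ (k : ℝ) < ENNReal.ofReal |f x|} :=
        rieszGammaFunc_le_two_rpow_mul_tsum hs₀ fun _ => ENNReal.ofReal_ne_top
    _ ≤ 2 ^ s * (choquet (rieszCap n α s) (fun x => ENNReal.ofReal |f x| ^ s) /
          (1 - 2 ^ (-s))) := by
        gcongr
        rw [ENNReal.le_div_iff_mul_le (.inl hc) (.inl (by simp)), mul_comm]
        exact one_sub_two_rpow_neg_mul_tsum_le_choquet rieszCap_mono hs₀ _
    _ = _ := by rw [hC, div_eq_mul_inv, div_eq_mul_inv]; ring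

/-- `Γ_{α,s}(f) ≤ C(s) ∫ |f|^s d cap_{α,s}` for every real-valued
`f`, where `Γ_{α,s}(f) = inf {‖φ‖_{L^s}^s : φ ≥ 0, I_α*φ ≥ |f| everywhere}`. -/
theorem statement12 (n : ℕ) (α s : ℝ) (hα0 : 0 < α) (hαn : α < n) (hs : 1 < s) :
    ∃ C : ℝ, 0 < C ∧ ∀ f : Rn n → ℝ,
      rieszGammaFunc n α s (fun x => ENNReal.ofReal |f x|) ≤
        ENNReal.ofReal C *
          choquet (rieszCap n α s) (fun x => ENNReal.ofReal |f x| ^ s) :=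
  statement12_general n α s hs

end
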